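/- For every integer k ≥ 0, every dimension n ≥ 1, and every x ∈ ℝ^n, ∫_{ℝ^n} ‖u‖^{2k} e^{−π‖u‖²} e^{2πi u·x} du = k! π^{−k} e^{−π‖x‖²} L_k^{n/2−1}(π‖x‖²), where L_k^{n/2−1} is the generalized Laguerre polynomial of degree k with parameter n/2 − 1. -/

import Mathlib

open MeasureTheory
open scoped Real

/-- The generalized Laguerre polynomial of degree `k` with parameter `α`:
`L_k^α(t) = ∑_{m=0}^k (-1)^m binom(k+α, k-m) t^m / m!`, where
`binom(k+α, k-m) = (∏_{l=m+1}^k (α + l)) / (k-m)!`. -/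
noncomputable def laguerre (α : ℝ) (k : ℕ) (t : ℝ) : ℝ :=
  ∑ m ∈ Finset.range (k + 1),
    (-1 : ℝ) ^ m * ((∏ l ∈ Finset.Icc (m + 1) k, (α + l)) / ((k - m).factorial : ℝ)) *
      t ^ m / (m.factorial : ℝ)

/-!
For `t > 0` put `I_k(t) = ∫ ‖u‖^{2k} e^{-πt‖u‖²} e^{2πi⟪u, x⟫} du`. Differentiating under
the integral sign gives `I_k' = -π I_{k+1}`, and `I_0(t) = t^{-n/2} e^{-π‖x‖²/t}` is the Fourier
transform of a Gaussian. On the other side, the recurrence of the Laguerre coefficients shows that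
`K_k(t) = t^{-(α+k+1)} e^{-c/t} L_k^α(c/t)` satisfies `K_k' = -(k+1) K_{k+1}`. Hence, by induction
on `k`, `I_k = k! π^{-k} K_k` with `α = n/2 - 1` and `c = π‖x‖²`; now evaluate at `t = 1`.
-/

open Finset
open Complex (I)
open Module (finrank)
open scoped Nat

noncomputable def laguerreCoeff (α : ℝ) (k m : ℕ) : ℝ :=
  (-1) ^ m * (∏ l ∈ Icc (m + 1) k, (α + l)) / ((k - m)! * m !)

theorem laguerre_eq_sum (α : ℝ) (k : ℕ) (t : ℝ) :
    laguerre α k t = ∑ m ∈ range (k + 1), laguerreCoeff α k m * t ^ m := by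
  refine sum_congr rfl fun m _ => ?_
  rw [laguerreCoeff]
  ring

theorem laguerreCoeff_succ_zero (α : ℝ) (k : ℕ) :
    (k + 1) * laguerreCoeff α (k + 1) 0 = (α + k + 1) * laguerreCoeff α k 0 := by
  simp only [laguerreCoeff, zero_add, Nat.sub_zero, prod_Icc_succ_top (Nat.le_add_left 1 k),
    Nat.factorial_succ]
  push_cast
  field_simp
  ring

theorem laguerreCoeff_succ_self (α : ℝ) (k : ℕ) :
    (k + 1) * laguerreCoeff α (k + 1) (k + 1) = -laguerreCoeff α k k := by
  simp only [laguerreCoeff, Icc_eq_empty (lt_add_one _).not_ge, prod_empty, Nat.sub_self,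
    Nat.factorial_succ, pow_succ]
  push_cast
  field_simp

theorem laguerreCoeff_succ_succ (α : ℝ) {k m : ℕ} (h : m < k) :
    (k + 1) * laguerreCoeff α (k + 1) (m + 1) =
      (α + k + m + 2) * laguerreCoeff α k (m + 1) - laguerreCoeff α k m := by
  obtain ⟨d, rfl⟩ := Nat.exists_eq_add_of_lt h
  have top : ∏ l ∈ Icc (m + 2) (m + d + 2), (α + l) =
      (∏ l ∈ Icc (m + 2) (m + d + 1), (α + l)) * (α + (m + d + 2 : ℕ)) :=
    prod_Icc_succ_top (by omega) _
  have bot : ∏ l ∈ Icc (m + 1) (m + d + 1), (α + l) =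
      (α + (m + 1 : ℕ)) * ∏ l ∈ Icc (m + 2) (m + d + 1), (α + l) := by
    rw [← mul_prod_Ioc_eq_prod_Icc (by omega), ← Icc_add_one_left_eq_Ioc]
    rfl
  simp only [laguerreCoeff, show m + d + 1 + 1 - (m + 1) = d + 1 by omega,
    show m + d + 1 - (m + 1) = d by omega, show m + d + 1 - m = d + 1 by omega, top, bot,
    Nat.factorial_succ, pow_succ]
  push_cast
  field_simp
  ring

/-- With `H m = y ^ m` this is `(k+1) L_{k+1}^α(y) = (α+k+1-y) L_k^α(y) + y (L_k^α)'(y)`. -/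
theorem laguerreCoeff_recurrence (α : ℝ) (k : ℕ) (H : ℕ → ℝ) :
    (k + 1) * ∑ m ∈ range (k + 2), laguerreCoeff α (k + 1) m * H m =
      ∑ m ∈ range (k + 1), laguerreCoeff α k m * ((α + k + m + 1) * H m - H (m + 1)) := by
  simp only [mul_sub, sum_sub_distrib, mul_sum]
  rw [sum_range_succ', sum_range_succ, sum_range_succ' (fun m => _ * ((_ + (m : ℝ) + 1) * H m)),
    sum_range_succ (fun m => laguerreCoeff α k m * H (m + 1))]
  have mid : ∀ m ∈ range k, (k + 1 : ℝ) * (laguerreCoeff α (k + 1) (m + 1) * H (m + 1)) =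
      laguerreCoeff α k (m + 1) * ((α + k + (m + 1 : ℕ) + 1) * H (m + 1)) -
        laguerreCoeff α k m * H (m + 1) := fun m hm => by
    rw [← mul_assoc, laguerreCoeff_succ_succ α (mem_range.mp hm)]
    push_cast
    ring
  rw [sum_congr rfl mid, sum_sub_distrib]
  linear_combination H 0 * laguerreCoeff_succ_zero α k + H (k + 1) * laguerreCoeff_succ_self α k

theorem hasDerivAt_rpow_neg_mul_exp_neg_div (γ c : ℝ) {t : ℝ} (ht : 0 < t) :
    HasDerivAt (fun s => s ^ (-γ) * Real.exp (-c / s))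
      (-γ * (t ^ (-(γ + 1)) * Real.exp (-c / t)) + c * (t ^ (-(γ + 2)) * Real.exp (-c / t)))
      t := by
  have hpow : HasDerivAt (fun s => s ^ (-γ)) (-γ * t ^ (-γ - 1)) t :=
    Real.hasDerivAt_rpow_const (Or.inl ht.ne')
  have hexp : HasDerivAt (fun s => Real.exp (-c / s)) (Real.exp (-c / t) * (c / t ^ 2)) t := by
    have := ((hasDerivAt_inv ht.ne').const_mul (-c)).exp
    simp only [← div_eq_mul_inv] at this
    exact this.congr_deriv (by ring)
  refine (hpow.mul hexp).congr_deriv ?_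
  have h1 : t ^ (-γ - 1) = t ^ (-(γ + 1)) := by ring_nf
  have h2 : t ^ (-(γ + 2)) = t ^ (-γ) / t ^ 2 := by
    rw [neg_add, Real.rpow_add ht, Real.rpow_neg ht.le 2, Real.rpow_two, div_eq_mul_inv]
  rw [h1, h2]
  ring

/-- `laguerreKernel α k c t = t^{-(α+k+1)} e^{-c/t} L_k^α(c/t)`. -/
noncomputable def laguerreKernel (α : ℝ) (k : ℕ) (c t : ℝ) : ℝ :=
  ∑ m ∈ range (k + 1),
    laguerreCoeff α k m * c ^ m * (t ^ (-(α + k + m + 1)) * Real.exp (-c / t))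

theorem laguerreKernel_one (α : ℝ) (k : ℕ) (c : ℝ) :
    laguerreKernel α k c 1 = Real.exp (-c) * laguerre α k c := by
  simp only [laguerreKernel, laguerre_eq_sum, mul_sum, Real.one_rpow, div_one]
  exact sum_congr rfl fun m _ => by ring

theorem laguerreKernel_zero (α c t : ℝ) :
    laguerreKernel α 0 c t = t ^ (-(α + 1)) * Real.exp (-c / t) := by
  simp [laguerreKernel, laguerreCoeff]

theorem hasDerivAt_laguerreKernel (α : ℝ) (k : ℕ) (c : ℝ) {t : ℝ} (ht : 0 < t) :
    HasDerivAt (laguerreKernel α k c) (-(k + 1) * laguerreKernel α (k + 1) c t) t := by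
  have hterm := fun m (_ : m ∈ range (k + 1)) =>
    (hasDerivAt_rpow_neg_mul_exp_neg_div (α + k + m + 1) c ht).const_mul
      (laguerreCoeff α k m * c ^ m)
  refine (HasDerivAt.fun_sum hterm).congr_deriv ?_
  set H : ℕ → ℝ := fun m => c ^ m * (t ^ (-(α + k + m + 2)) * Real.exp (-c / t))
  calc _ = -∑ m ∈ range (k + 1),
        laguerreCoeff α k m * ((α + k + m + 1) * H m - H (m + 1)) := by
        rw [← sum_neg_distrib]
        refine sum_congr rfl fun m _ => ?_
        simp only [H]
        push_cast
        ring_nf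
    _ = -(k + 1) * laguerreKernel α (k + 1) c t := by
        rw [← laguerreCoeff_recurrence, laguerreKernel, mul_sum, mul_sum, ← sum_neg_distrib]
        refine sum_congr rfl fun m _ => ?_
        simp only [H]
        push_cast
        ring_nf

section GaussianMoment

variable {V : Type*} [NormedAddCommGroup V] [InnerProductSpace ℝ V] [FiniteDimensional ℝ V]
  [MeasurableSpace V] [BorelSpace V]

theorem integrable_norm_pow_mul_exp_neg_mul_sq (k : ℕ) {b : ℝ} (hb : 0 < b) :
    Integrable (fun u : V => ‖u‖ ^ (2 * k) * Real.exp (-b * ‖u‖ ^ 2)) := by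
  have hgauss : Integrable (fun u : V => Real.exp (-(b / 2) * ‖u‖ ^ 2)) :=
    Integrable.of_integral_ne_zero <| by
      rw [GaussianFourier.integral_rexp_neg_mul_sq_norm (half_pos hb)]
      positivity
  refine (hgauss.const_mul (k ! * (2 / b) ^ k)).mono' (by fun_prop) (ae_of_all _ fun u => ?_)
  have hpow := Real.pow_div_factorial_le_exp (b / 2 * ‖u‖ ^ 2) (by positivity) k
  have hscale : (2 / b) ^ k * (b / 2 * ‖u‖ ^ 2) ^ k = ‖u‖ ^ (2 * k) := by
    rw [← mul_pow, pow_mul]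
    congr 1
    field_simp
  rw [Real.norm_of_nonneg (by positivity)]
  calc ‖u‖ ^ (2 * k) * Real.exp (-b * ‖u‖ ^ 2)
      = k ! * (2 / b) ^ k * ((b / 2 * ‖u‖ ^ 2) ^ k / k !) * Real.exp (-b * ‖u‖ ^ 2) := by
        rw [← hscale]
        field_simp
    _ ≤ k ! * (2 / b) ^ k * Real.exp (b / 2 * ‖u‖ ^ 2) * Real.exp (-b * ‖u‖ ^ 2) := by
        gcongr
    _ = k ! * (2 / b) ^ k * Real.exp (-(b / 2) * ‖u‖ ^ 2) := by
        rw [mul_assoc, ← Real.exp_add]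
        ring_nf

noncomputable def gaussianMoment (w : V → ℂ) (k : ℕ) (b : ℝ) : ℂ :=
  ∫ u, ((‖u‖ ^ (2 * k) * Real.exp (-b * ‖u‖ ^ 2) : ℝ) : ℂ) * w u

theorem hasDerivAt_gaussianMoment {w : V → ℂ} (hw : AEStronglyMeasurable w)
    (hw_le : ∀ u, ‖w u‖ ≤ 1) (k : ℕ) {b : ℝ} (hb : 0 < b) :
    HasDerivAt (gaussianMoment w k) (-gaussianMoment w (k + 1) b) b := by
  have hmeas : ∀ j s, AEStronglyMeasurable
      (fun u : V => ((‖u‖ ^ (2 * j) * Real.exp (-s * ‖u‖ ^ 2) : ℝ) : ℂ) * w u) :=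
    fun j s =>
    (Continuous.aestronglyMeasurable (by fun_prop)).mul hw
  have hderiv : ∀ (u : V) (s : ℝ), HasDerivAt
      (fun s => ((‖u‖ ^ (2 * k) * Real.exp (-s * ‖u‖ ^ 2) : ℝ) : ℂ) * w u)
      (-(((‖u‖ ^ (2 * (k + 1)) * Real.exp (-s * ‖u‖ ^ 2) : ℝ) : ℂ) * w u)) s := by
    intro u s
    have hreal : HasDerivAt (fun s => ‖u‖ ^ (2 * k) * Real.exp (-s * ‖u‖ ^ 2))
        (-(‖u‖ ^ (2 * (k + 1)) * Real.exp (-s * ‖u‖ ^ 2))) s :=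
      (((hasDerivAt_neg s).mul_const _).exp.const_mul _).congr_deriv (by ring)
    exact (hreal.ofReal_comp.mul_const (w u)).congr_deriv (by push_cast; ring)
  have key := hasDerivAt_integral_of_dominated_loc_of_deriv_le
    (Metric.ball_mem_nhds b (half_pos hb))
    (bound := fun u : V => ‖u‖ ^ (2 * (k + 1)) * Real.exp (-(b / 2) * ‖u‖ ^ 2))
    (.of_forall fun s => hmeas k s)
    (integrable_norm_pow_mul_exp_neg_mul_sq k hb |>.ofReal.mul_bdd hw (ae_of_all _ hw_le))
    (hmeas (k + 1) b).neg ?_ (integrable_norm_pow_mul_exp_neg_mul_sq (k + 1) (half_pos hb))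
    (ae_of_all _ fun u s _ => hderiv u s)
  · rw [integral_neg] at key
    exact key.2
  · refine ae_of_all _ fun u s hs => ?_
    have hs : b / 2 < s := by
      rw [Metric.mem_ball, Real.dist_eq, abs_lt] at hs
      linarith
    rw [norm_neg, norm_mul, Complex.norm_real, Real.norm_of_nonneg (by positivity)]
    calc _ ≤ ‖u‖ ^ (2 * (k + 1)) * Real.exp (-s * ‖u‖ ^ 2) * 1 := by gcongr; exact hw_le u
      _ ≤ _ := by
        rw [mul_one]
        gcongr

theorem gaussianMoment_zero_fourier (x : V) {t : ℝ} (ht : 0 < t) :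
    gaussianMoment (fun u => Complex.exp (2 * π * I * ((inner ℝ u x : ℝ) : ℂ))) 0 (π * t) =
      ((t ^ (-(finrank ℝ V / 2 : ℝ)) * Real.exp (-(π * ‖x‖ ^ 2) / t) : ℝ) : ℂ) := by
  have hb : 0 < ((π * t : ℝ) : ℂ).re := by simpa using mul_pos Real.pi_pos ht
  calc _ = ∫ v : V, Complex.exp (-((π * t : ℝ) : ℂ) * ‖v‖ ^ 2 +
        2 * π * I * ((inner ℝ x v : ℝ) : ℂ)) := by
        refine integral_congr_ae (ae_of_all _ fun v => ?_)
        simp only [mul_zero, pow_zero, one_mul, Complex.exp_add, real_inner_comm x v]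
        push_cast
        ring
    _ = _ := GaussianFourier.integral_cexp_neg_mul_sq_norm_add hb _ x
    _ = _ := by
        have hbase : (π : ℂ) / ((π * t : ℝ) : ℂ) = ((t⁻¹ : ℝ) : ℂ) := by
          push_cast
          field_simp
        have hexp : (2 * π * I) ^ 2 * (‖x‖ : ℂ) ^ 2 / (4 * ((π * t : ℝ) : ℂ)) =
            ((-(π * ‖x‖ ^ 2) / t : ℝ) : ℂ) := by
          push_cast
          field_simp
          rw [Complex.I_sq]
          ring
        rw [hbase, hexp, ← Complex.ofReal_exp, show (finrank ℝ V / 2 : ℂ) =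
          ((finrank ℝ V / 2 : ℝ) : ℂ) by push_cast; rfl,
          ← Complex.ofReal_cpow (inv_nonneg.mpr ht.le), Real.inv_rpow ht.le,
          ← Real.rpow_neg ht.le]
        push_cast
        rfl

theorem gaussianMoment_fourier_eq_laguerreKernel (x : V) (k : ℕ) {t : ℝ} (ht : 0 < t) :
    gaussianMoment (fun u => Complex.exp (2 * π * I * ((inner ℝ u x : ℝ) : ℂ))) k (π * t) =
      ((k ! / π ^ k * laguerreKernel (finrank ℝ V / 2 - 1) k (π * ‖x‖ ^ 2) t : ℝ) : ℂ) := by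
  induction k generalizing t with
  | zero =>
    rw [gaussianMoment_zero_fourier x ht, laguerreKernel_zero, sub_add_cancel]
    simp
  | succ k ih =>
    have hw_le : ∀ u : V, ‖Complex.exp (2 * π * I * ((inner ℝ u x : ℝ) : ℂ))‖ ≤ 1 :=
      fun u => by
        rw [Complex.norm_exp]
        simp
    have hlhs := (hasDerivAt_gaussianMoment (by fun_prop) hw_le k (mul_pos Real.pi_pos ht)).scomp t
      ((hasDerivAt_id t).const_mul π)
    have hrhs := (((hasDerivAt_laguerreKernel (finrank ℝ V / 2 - 1) k (π * ‖x‖ ^ 2)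
      ht).const_mul (k ! / π ^ k : ℝ)).ofReal_comp).congr_of_eventuallyEq
      (Filter.eventually_of_mem (Ioi_mem_nhds ht) fun s hs => ih hs)
    have h := hlhs.unique hrhs
    simp only [mul_one, Complex.real_smul] at h
    generalize gaussianMoment (V := V) _ (k + 1) (π * t) = G at h ⊢
    generalize laguerreKernel _ (k + 1) _ t = L at h ⊢
    calc G = -(π * -G) / π := by field_simp
      _ = _ := by
        rw [h, Nat.factorial_succ]
        push_cast
        ring

end GaussianMoment

theorem integral_norm_pow_gaussian_exp_general {n : ℕ} (k : ℕ)
    (x : EuclideanSpace ℝ (Fin n)) :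
    ∫ u : EuclideanSpace ℝ (Fin n),
        ((‖u‖ ^ (2 * k) * Real.exp (-π * ‖u‖ ^ 2) : ℝ) : ℂ) *
          Complex.exp (2 * π * Complex.I * ((inner ℝ u x : ℝ) : ℂ)) =
      (((k.factorial : ℝ) / π ^ k * Real.exp (-π * ‖x‖ ^ 2) *
          laguerre ((n : ℝ) / 2 - 1) k (π * ‖x‖ ^ 2) : ℝ) : ℂ) := by
  have h := gaussianMoment_fourier_eq_laguerreKernel x k one_pos
  rw [mul_one, finrank_euclideanSpace_fin, laguerreKernel_one, ← neg_mul, ← mul_assoc] at h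
  exact h

/-- **Fourier inversion of `‖u‖^{2k} e^{-π ‖u‖²}` via Laguerre polynomials.**
For every integer `k ≥ 0`, dimension `n ≥ 1` and `x ∈ ℝ^n`,
`∫_{ℝ^n} ‖u‖^{2k} e^{-π‖u‖²} e^{2πi u·x} du = k! π^{-k} e^{-π‖x‖²} L_k^{n/2-1}(π‖x‖²)`. -/
theorem integral_norm_pow_gaussian_exp {n : ℕ} (hn : 1 ≤ n) (k : ℕ)
    (x : EuclideanSpace ℝ (Fin n)) :
    ∫ u : EuclideanSpace ℝ (Fin n),
        ((‖u‖ ^ (2 * k) * Real.exp (-π * ‖u‖ ^ 2) : ℝ) : ℂ) *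
          Complex.exp (2 * π * Complex.I * ((inner ℝ u x : ℝ) : ℂ)) =
      (((k.factorial : ℝ) / π ^ k * Real.exp (-π * ‖x‖ ^ 2) *
          laguerre ((n : ℝ) / 2 - 1) k (π * ‖x‖ ^ 2) : ℝ) : ℂ) :=
  integral_norm_pow_gaussian_exp_general k x
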